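/- Let F : Ring → Set be a left exact functor (preserving finite limits). Then the class of F-fibrations is closed under composition, contains all isomorphisms, and satisfies: if the composite f∘g of two surjective homomorphisms is an F-fibration then so is f. -/

import Mathlib

set_option maxHeartbeats 1000000
set_option synthInstance.maxHeartbeats 400000

noncomputable section
open scoped Classical
open Finsupp AddMonoidAlgebra Unitization

/-- The unitization of a non-unital ring. -/
abbrev URing (R : Type) [NonUnitalRing R] : Type := Unitization ℤ R

/-- Polynomial-type algebra over the unitization, with exponent monoid `G`. -/
abbrev MA (R : Type) [NonUnitalRing R] (G : Type) [AddCommMonoid G] : Type :=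
    @AddMonoidAlgebra (URing R) G Ring.toSemiring


variable {R : Type} [NonUnitalRing R] {G : Type} [AddCommMonoid G]

/-- `fst : Unitization ℤ R → ℤ` as an additive monoid hom. -/
def fstAdd (R : Type) [NonUnitalRing R] : URing R →+ ℤ where
  toFun x := x.fst
  map_zero' := rfl
  map_add' _ _ := rfl

theorem coeff_fst_mul (p q : MA R G) (a : G) (hp : ∀ b, (p.coeff b).fst = 0) :
    ((p * q).coeff a).fst = 0 := by
  have h1 : ∀ (s : Finset G) (f : G → URing R),
      (∑ x ∈ s, f x).fst = ∑ x ∈ s, (f x).fst := fun s f => map_sum (fstAdd R) f s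
  rw [AddMonoidAlgebra.coeff_mul, Finsupp.sum, h1]
  refine Finset.sum_eq_zero fun b _ => ?_
  rw [Finsupp.sum, h1]
  refine Finset.sum_eq_zero fun c _ => ?_
  show (if b + c = a then p.coeff b * q.coeff c else 0).fst = 0
  split
  · rw [Unitization.fst_mul, hp b, zero_mul]
  · rfl

/-- The non-unital subring of `MA R G` of elements all of whose coefficients lie in `R`
(i.e. have vanishing unital component).  This is the polynomial ring with coefficients in the
non-unital ring `R` and exponents in `G`. -/
def coeffSub (R : Type) [NonUnitalRing R] (G : Type) [AddCommMonoid G] :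
    NonUnitalSubring (MA R G) where
  carrier := {p | ∀ a, (p.coeff a).fst = 0}
  add_mem' := by intro p q hp hq a; rw [AddMonoidAlgebra.coeff_add, Finsupp.add_apply, Unitization.fst_add, hp a, hq a, add_zero]
  zero_mem' := by intro a; rfl
  neg_mem' := by intro p hp a; rw [AddMonoidAlgebra.coeff_neg, Finsupp.neg_apply, Unitization.fst_neg, hp a, neg_zero]
  mul_mem' := by intro p q hp _; exact fun a => coeff_fst_mul p q a hp

/-- The polynomial ring `R[x]` over a non-unital ring `R`. -/
abbrev NPX (R : Type) [NonUnitalRing R] : Type := ↥(coeffSub R ℕ)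

/-- The monoid homomorphism sending a monomial exponent to `1` if it is zero and `0` otherwise
(evaluation of all variables at `0`). -/
def gZero (R G : Type) [NonUnitalRing R] [AddCommMonoid G]
    (hG : ∀ a b : G, a + b = 0 → a = 0 ∧ b = 0) : Multiplicative G →* URing R where
  toFun a := if a.toAdd = 0 then (1 : URing R) else 0
  map_one' := if_pos rfl
  map_mul' a b := by
    show (if Multiplicative.toAdd a + Multiplicative.toAdd b = 0 then (1 : URing R) else 0)
      = (if Multiplicative.toAdd a = 0 then (1 : URing R) else 0)
        * (if Multiplicative.toAdd b = 0 then (1 : URing R) else 0)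
    by_cases ha : Multiplicative.toAdd a = 0 <;> by_cases hb : Multiplicative.toAdd b = 0
    · rw [if_pos (by rw [ha, hb, add_zero]), if_pos ha, if_pos hb, one_mul]
    · rw [if_neg (fun h => hb (hG _ _ h).2), if_neg hb, mul_zero]
    · rw [if_neg (fun h => ha (hG _ _ h).1), if_neg ha, zero_mul]
    · rw [if_neg (fun h => ha (hG _ _ h).1), if_neg ha, zero_mul]

/-- Evaluation of all variables at `0`, on the unitization level. -/
abbrev ev0U (R G : Type) [NonUnitalRing R] [AddCommMonoid G]
    (hG : ∀ a b : G, a + b = 0 → a = 0 ∧ b = 0) : MA R G →+* URing R :=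
  liftNCRingHom (k := URing R) (G := G) (R := URing R) (RingHom.id (URing R)) (gZero R G hG) (fun x y => by
    rw [RingHom.id_apply]
    rcases em (Multiplicative.toAdd y = 0) with h | h
    · rw [show (gZero R G hG) y = 1 from if_pos h]; exact Commute.one_right x
    · rw [show (gZero R G hG) y = 0 from if_neg h]; exact Commute.zero_right x)

/-- Evaluation of all variables at `1` (sum of coefficients), on the unitization level. -/
abbrev ev1U (R G : Type) [NonUnitalRing R] [AddCommMonoid G] : MA R G →+* URing R :=
  liftNCRingHom (k := URing R) (G := G) (R := URing R) (RingHom.id (URing R)) 1 (fun x y => by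
    rw [RingHom.id_apply, MonoidHom.one_apply]
    exact Commute.one_right x)

theorem liftNC_eq_sum (f : URing R →+* URing R) (g : Multiplicative G →* URing R)
    (hc : ∀ x y, Commute (f x) (g y)) (p : MA R G) :
    (liftNCRingHom (k := URing R) (G := G) (R := URing R) f g hc) p = p.coeff.sum fun a c => f c * g (Multiplicative.ofAdd a) := by
  conv_lhs => rw [← AddMonoidAlgebra.sum_coeff_single p]
  rw [map_finsuppSum]
  refine Finsupp.sum_congr fun a _ => ?_
  exact AddMonoidAlgebra.liftNC_single (f : URing R →+ URing R) g a (p.coeff a)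

theorem fst_liftNC (g : Multiplicative G →* URing R)
    (hc : ∀ x y, Commute ((RingHom.id (URing R)) x) (g y))
    (p : MA R G) (hp : ∀ a, (p.coeff a).fst = 0) :
    ((liftNCRingHom (k := URing R) (G := G) (R := URing R) (RingHom.id (URing R)) g hc) p).fst = 0 := by
  rw [liftNC_eq_sum, Finsupp.sum,
    show (∑ a ∈ p.coeff.support, (RingHom.id (URing R)) (p.coeff a) * g (Multiplicative.ofAdd a)).fst
      = ∑ a ∈ p.coeff.support, ((RingHom.id (URing R)) (p.coeff a) * g (Multiplicative.ofAdd a)).fst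
      from map_sum (fstAdd R) _ _]
  refine Finset.sum_eq_zero fun a _ => ?_
  rw [Unitization.fst_mul]
  show (p.coeff a).fst * _ = 0
  rw [hp a, zero_mul]

/-- Corestriction of a unitization-level ring homomorphism to the non-unital coefficient ring. -/
def toRHom (R G : Type) [NonUnitalRing R] [AddCommMonoid G] (Ψ : MA R G →+* URing R)
    (h : ∀ p : ↥(coeffSub R G), (Ψ ↑p).fst = 0) :
    ↥(coeffSub R G) →ₙ+* R where
  toFun p := (Ψ ↑p).snd
  map_zero' := by simp
  map_add' p q := by push_cast [map_add]; simp
  map_mul' p q := by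
    push_cast [map_mul]
    rw [Unitization.snd_mul, h p, h q, zero_smul, zero_smul, zero_add, zero_add]

theorem hGnat : ∀ a b : ℕ, a + b = 0 → a = 0 ∧ b = 0 := fun _ _ h => Nat.add_eq_zero.mp h

/-- Evaluation of all variables at `0`, as a homomorphism of non-unital rings. -/
def evZ (R G : Type) [NonUnitalRing R] [AddCommMonoid G]
    (hG : ∀ a b : G, a + b = 0 → a = 0 ∧ b = 0) : ↥(coeffSub R G) →ₙ+* R :=
  toRHom R G (ev0U R G hG) (fun p => fst_liftNC _ _ _ p.2)

/-- Evaluation of all variables at `1` (sum of coefficients), as a homomorphism of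
non-unital rings. -/
def evO (R G : Type) [NonUnitalRing R] [AddCommMonoid G] : ↥(coeffSub R G) →ₙ+* R :=
  toRHom R G (ev1U R G) (fun p => fst_liftNC _ _ _ p.2)

/-- Evaluation of the polynomial variable at `0`, i.e. `∂⁰ : R[x] → R`. -/
def ev0 (R : Type) [NonUnitalRing R] : NPX R →ₙ+* R := evZ R ℕ hGnat

/-- Evaluation of the polynomial variable at `1` (sum of coefficients), i.e. `∂¹ : R[x] → R`. -/
def ev1 (R : Type) [NonUnitalRing R] : NPX R →ₙ+* R := evO R ℕ

/-- The constant-inclusion of the coefficient ring into a polynomial ring. -/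
def constG (R G : Type) [NonUnitalRing R] [AddCommMonoid G] : R →ₙ+* ↥(coeffSub R G) where
  toFun r := ⟨AddMonoidAlgebra.single (0 : G) ((r : R) : URing R), by
    intro a
    rw [AddMonoidAlgebra.coeff_single, Finsupp.single_apply]
    split <;> simp⟩
  map_zero' := Subtype.ext (by
    show AddMonoidAlgebra.single (0 : G) (((0 : R) : URing R)) = (0 : MA R G)
    rw [Unitization.inr_zero, AddMonoidAlgebra.single_zero])
  map_add' r s := Subtype.ext (by
    show AddMonoidAlgebra.single (0 : G) (((r + s : R) : URing R))
      = (AddMonoidAlgebra.single (0 : G) ((r : R) : URing R) : MA R G)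
        + AddMonoidAlgebra.single (0 : G) ((s : R) : URing R)
    rw [Unitization.inr_add, AddMonoidAlgebra.single_add])
  map_mul' r s := Subtype.ext (by
    show AddMonoidAlgebra.single (0 : G) (((r * s : R) : URing R))
      = (AddMonoidAlgebra.single (0 : G) ((r : R) : URing R) : MA R G)
        * AddMonoidAlgebra.single (0 : G) ((s : R) : URing R)
    rw [AddMonoidAlgebra.single_mul_single, zero_add, Unitization.inr_mul])

/-- The constant-inclusion `R → R[x]`. -/
def constX (R : Type) [NonUnitalRing R] : R →ₙ+* NPX R := constG R ℕ

/-- Two homomorphisms of non-unital rings `f₀ f₁ : S → R` are elementary homotopic if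
there is a homomorphism `H : S → R[x]` with `∂⁰ ∘ H = f₀` and `∂¹ ∘ H = f₁`. -/
def ElemHomotopic {S R : Type} [NonUnitalRing S] [NonUnitalRing R] (f₀ f₁ : S →ₙ+* R) : Prop :=
  ∃ H : S →ₙ+* NPX R, (ev0 R).comp H = f₀ ∧ (ev1 R).comp H = f₁

/-- The monomial `r·t^a` in the polynomial ring over a non-unital ring. -/
def mono {R : Type} [NonUnitalRing R] {G : Type} [AddCommMonoid G] (a : G) (r : R) :
    ↥(coeffSub R G) :=
  ⟨AddMonoidAlgebra.single a ((r : R) : URing R), by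
    intro b
    rw [AddMonoidAlgebra.coeff_single, Finsupp.single_apply]
    split <;> simp⟩

theorem evZ_mono {R G : Type} [NonUnitalRing R] [AddCommMonoid G]
    (hG : ∀ a b : G, a + b = 0 → a = 0 ∧ b = 0) (a : G) (r : R) :
    evZ R G hG (mono a r) = if a = 0 then r else 0 := by
  show ((ev0U R G hG) (AddMonoidAlgebra.single a ((r : R) : URing R))).snd = _
  rw [show (ev0U R G hG) (AddMonoidAlgebra.single a ((r : R) : URing R))
      = ((r : R) : URing R) * (gZero R G hG) (Multiplicative.ofAdd a)
      from AddMonoidAlgebra.liftNCRingHom_single _ _ _ _ _]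
  by_cases h : a = 0
  · rw [show (gZero R G hG) (Multiplicative.ofAdd a) = 1 from if_pos h, mul_one, if_pos h,
      Unitization.snd_inr]
  · rw [show (gZero R G hG) (Multiplicative.ofAdd a) = 0 from if_neg h, mul_zero, if_neg h,
      Unitization.snd_zero]

theorem evO_mono {R G : Type} [NonUnitalRing R] [AddCommMonoid G] (a : G) (r : R) :
    evO R G (mono a r) = r := by
  show ((ev1U R G) (AddMonoidAlgebra.single a ((r : R) : URing R))).snd = _
  rw [show (ev1U R G) (AddMonoidAlgebra.single a ((r : R) : URing R))
      = ((r : R) : URing R) * (1 : Multiplicative G →* URing R) (Multiplicative.ofAdd a)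
      from AddMonoidAlgebra.liftNCRingHom_single _ _ _ _ _]
  rw [MonoidHom.one_apply, mul_one, Unitization.snd_inr]

theorem coeff_fst_mul' {R G : Type} [NonUnitalRing R] [AddCommMonoid G]
    (p q : MA R G) (a : G) (hq : ∀ b, (q.coeff b).fst = 0) : ((p * q).coeff a).fst = 0 := by
  have h1 : ∀ (s : Finset G) (f : G → URing R),
      (∑ x ∈ s, f x).fst = ∑ x ∈ s, (f x).fst := fun s f => map_sum (fstAdd R) f s
  rw [AddMonoidAlgebra.coeff_mul, Finsupp.sum, h1]
  refine Finset.sum_eq_zero fun b _ => ?_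
  rw [Finsupp.sum, h1]
  refine Finset.sum_eq_zero fun c _ => ?_
  show (if b + c = a then p.coeff b * q.coeff c else 0).fst = 0
  split
  · rw [Unitization.fst_mul, hq c, mul_zero]
  · rfl

theorem fst_mapDomain {R G G' : Type} [NonUnitalRing R] [AddCommMonoid G] [AddCommMonoid G']
    (f : G → G') (p : MA R G) (hp : ∀ b, (p.coeff b).fst = 0) (a : G') :
      ((Finsupp.mapDomain f p.coeff) a).fst = 0 := by
  have h1 : ∀ (s : Finset G) (g : G → URing R),
      (∑ x ∈ s, g x).fst = ∑ x ∈ s, (g x).fst := fun s g => map_sum (fstAdd R) g s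
  rw [Finsupp.mapDomain, Finsupp.sum_apply, Finsupp.sum, h1]
  refine Finset.sum_eq_zero fun b _ => ?_
  rw [Finsupp.single_apply]
  split
  · exact hp b
  · rfl

/-- Multiplication by `x^k` on `R[x]` (shift of exponents). -/
def shiftPoly (R : Type) [NonUnitalRing R] (k : ℕ) (p : NPX R) : NPX R :=
  ⟨AddMonoidAlgebra.ofCoeff (Finsupp.mapDomain (· + k) (p : MA R ℕ).coeff), fun a => fst_mapDomain _ (p : MA R ℕ) p.2 a⟩

/-- The path ring `ER = ker(∂⁰ : R[x] → R) = xR[x]` as a non-unital subring of `R[x]`. -/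
def ERsub (R : Type) [NonUnitalRing R] : NonUnitalSubring (NPX R) where
  carrier := {p | ev0 R p = 0}
  add_mem' := by intro p q hp hq; show ev0 R (p + q) = 0; rw [map_add, hp, hq, add_zero]
  zero_mem' := map_zero _
  neg_mem' := by intro p hp; show ev0 R (-p) = 0; rw [map_neg, hp, neg_zero]
  mul_mem' := by intro p q hp hq; show ev0 R (p * q) = 0; rw [map_mul, hp, zero_mul]

/-- The loop ring `ΩR = ker(∂⁰) ∩ ker(∂¹) ⊆ R[x]` as a non-unital subring of `R[x]`. -/
def OmegaSub (R : Type) [NonUnitalRing R] : NonUnitalSubring (NPX R) where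
  carrier := {p | ev0 R p = 0 ∧ ev1 R p = 0}
  add_mem' := by
    intro p q hp hq
    exact ⟨by rw [map_add, hp.1, hq.1, add_zero], by rw [map_add, hp.2, hq.2, add_zero]⟩
  zero_mem' := ⟨map_zero _, map_zero _⟩
  neg_mem' := by
    intro p hp
    exact ⟨by rw [map_neg, hp.1, neg_zero], by rw [map_neg, hp.2, neg_zero]⟩
  mul_mem' := by
    intro p q hp hq
    exact ⟨by rw [map_mul, hp.1, zero_mul], by rw [map_mul, hp.2, zero_mul]⟩

theorem ev0_mono {R : Type} [NonUnitalRing R] (n : ℕ) (r : R) :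
    ev0 R (mono n r) = if n = 0 then r else 0 := by
  by_cases h : n = 0
  · rw [if_pos h]
    have := evZ_mono (R := R) hGnat n r
    rwa [if_pos h] at this
  · rw [if_neg h]
    have := evZ_mono (R := R) hGnat n r
    rwa [if_neg h] at this

theorem ev1_mono {R : Type} [NonUnitalRing R] (n : ℕ) (r : R) :
    ev1 R (mono n r) = r := evO_mono n r

theorem constX_eq_mono {R : Type} [NonUnitalRing R] (r : R) :
    constX R r = mono 0 r := Subtype.ext rfl

theorem ev0_constX {R : Type} [NonUnitalRing R] (r : R) : ev0 R (constX R r) = r := by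
  rw [constX_eq_mono, ev0_mono]; exact if_pos rfl

theorem ev1_constX {R : Type} [NonUnitalRing R] (r : R) : ev1 R (constX R r) = r := by
  rw [constX_eq_mono]; exact ev1_mono 0 r

/-- The coefficient-wise map `R[x] → S[x]` induced by a homomorphism `f : R → S`
(as a plain function). -/
def polyMapF {A B : Type} [NonUnitalRing A] [NonUnitalRing B] (f : A →ₙ+* B) (p : NPX A) :
    NPX B :=
  ⟨AddMonoidAlgebra.ofCoeff (Finsupp.mapRange (fun c => ((f c.snd : B) : URing B)) (by simp) (p : MA A ℕ).coeff),
   by intro a; rw [Finsupp.mapRange_apply]; simp⟩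

/-- A (set-valued) functor on the category of non-unital rings. -/
structure RingFunctor : Type 1 where
  obj : (R : Type) → [NonUnitalRing R] → Type
  map : {R S : Type} → [NonUnitalRing R] → [NonUnitalRing S] → (R →ₙ+* S) → obj R → obj S
  map_id : ∀ (R : Type) [NonUnitalRing R], map (NonUnitalRingHom.id R) = id
  map_comp : ∀ {R S T : Type} [NonUnitalRing R] [NonUnitalRing S] [NonUnitalRing T]
    (f : R →ₙ+* S) (g : S →ₙ+* T), map (g.comp f) = map g ∘ map f

theorem coe_int_eq_inl {B : Type} [NonUnitalRing B] (k : ℤ) :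
    ((k : URing B)) = Unitization.inl k :=
  (eq_intCast (Unitization.inlRingHom ℤ B) k).symm

/-- The unitization-level extension of a homomorphism of non-unital rings. -/
def uMap {A B : Type} [NonUnitalRing A] [NonUnitalRing B] (f : A →ₙ+* B) :
    URing A →+* URing B where
  toFun x := Unitization.inl x.fst + ((f x.snd : B) : URing B)
  map_one' := by simp
  map_zero' := by simp
  map_add' x y := by
    apply Unitization.ext
    · simp
    · simp [map_add, add_add_add_comm]
  map_mul' x y := by
    apply Unitization.ext
    · simp
    · simp [Unitization.snd_mul, map_add, map_mul, map_zsmul, add_assoc,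
        coe_int_eq_inl, Unitization.fst_inl, Unitization.snd_inl]

theorem uMap_fst {A B : Type} [NonUnitalRing A] [NonUnitalRing B] (f : A →ₙ+* B)
    (x : URing A) : (uMap f x).fst = x.fst := by
  show (Unitization.inl x.fst + ((f x.snd : B) : URing B)).fst = x.fst
  simp

/-- The induced map `R[G] → S[G]` on polynomial rings over the unitizations. -/
def MAmap {A B G : Type} [NonUnitalRing A] [NonUnitalRing B] [AddCommMonoid G]
    (f : A →ₙ+* B) : MA A G →+* MA B G :=
  liftNCRingHom ((AddMonoidAlgebra.singleZeroRingHom).comp (uMap f))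
    (AddMonoidAlgebra.of (URing B) G) (fun x y => by
      show Commute (AddMonoidAlgebra.single 0 (uMap f x)) _
      rw [AddMonoidAlgebra.of_apply]
      unfold Commute SemiconjBy
      rw [AddMonoidAlgebra.single_mul_single, AddMonoidAlgebra.single_mul_single,
        zero_add, add_zero, mul_one, one_mul])

theorem MAmap_apply {A B G : Type} [NonUnitalRing A] [NonUnitalRing B] [AddCommMonoid G]
    (f : A →ₙ+* B) (p : MA A G) (a : G) : (MAmap f p).coeff a = uMap f (p.coeff a) := by
  have hsingle : ∀ (b : G) (c : URing A),
      MAmap f (AddMonoidAlgebra.single b c) = AddMonoidAlgebra.single b (uMap f c) := by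
    intro b c
    show liftNCRingHom _ _ _ (AddMonoidAlgebra.single b c) = _
    rw [show (liftNCRingHom ((AddMonoidAlgebra.singleZeroRingHom).comp (uMap f))
        (AddMonoidAlgebra.of (URing B) G) _) (AddMonoidAlgebra.single b c)
        = ((AddMonoidAlgebra.singleZeroRingHom).comp (uMap f)) c
          * (AddMonoidAlgebra.of (URing B) G) (Multiplicative.ofAdd b)
      from AddMonoidAlgebra.liftNCRingHom_single _ _ _ _ _]
    show AddMonoidAlgebra.single 0 (uMap f c) * _ = _
    rw [AddMonoidAlgebra.of_apply, AddMonoidAlgebra.single_mul_single, zero_add, mul_one, toAdd_ofAdd]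
  conv_lhs => rw [← AddMonoidAlgebra.sum_coeff_single p, map_finsuppSum]
  rw [AddMonoidAlgebra.coeff_finsuppSum, Finsupp.sum_apply, Finsupp.sum, Finset.sum_congr rfl
    (fun b _ => by rw [hsingle b (p.coeff b)])]
  rw [Finset.sum_congr rfl (fun b _ => by rw [AddMonoidAlgebra.coeff_single, Finsupp.single_apply])]
  rw [Finset.sum_ite_eq' p.coeff.support a fun b => uMap f (p.coeff b)]
  split
  · rfl
  · rename_i h
    rw [Finsupp.notMem_support_iff.mp h, map_zero]

/-- The subring of `MA R (Fin n →₀ ℕ)` corresponding to the `n`-th iterated path ring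
`EⁿR = (x₁⋯xₙ)·R[x₁,…,xₙ]`: elements with coefficients in `R` supported on exponents that
are positive in every variable. -/
def EnSub (R : Type) [NonUnitalRing R] (n : ℕ) : NonUnitalSubring (MA R (Fin n →₀ ℕ)) where
  carrier := {p | (∀ a, (p.coeff a).fst = 0) ∧ ∀ a : Fin n →₀ ℕ, (∃ i, a i = 0) → p.coeff a = 0}
  add_mem' := by
    rintro p q ⟨hp1, hp2⟩ ⟨hq1, hq2⟩
    refine ⟨fun a => by rw [AddMonoidAlgebra.coeff_add, Finsupp.add_apply, Unitization.fst_add, hp1 a, hq1 a, add_zero],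
      fun a ha => by rw [AddMonoidAlgebra.coeff_add, Finsupp.add_apply, hp2 a ha, hq2 a ha, add_zero]⟩
  zero_mem' := ⟨fun a => rfl, fun a _ => rfl⟩
  neg_mem' := by
    rintro p ⟨hp1, hp2⟩
    refine ⟨fun a => by rw [AddMonoidAlgebra.coeff_neg, Finsupp.neg_apply, Unitization.fst_neg, hp1 a, neg_zero],
      fun a ha => by rw [AddMonoidAlgebra.coeff_neg, Finsupp.neg_apply, hp2 a ha, neg_zero]⟩
  mul_mem' := by
    rintro p q ⟨hp1, hp2⟩ ⟨hq1, hq2⟩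
    refine ⟨fun a => coeff_fst_mul p q a hp1, ?_⟩
    rintro a ⟨i, hi⟩
    rw [AddMonoidAlgebra.coeff_mul, Finsupp.sum]
    refine Finset.sum_eq_zero fun b _ => ?_
    rw [Finsupp.sum]
    refine Finset.sum_eq_zero fun c _ => ?_
    split
    · rename_i h
      have hbc : b i + c i = 0 := by
        have := congrArg (fun v : Fin n →₀ ℕ => v i) h
        simpa [hi] using this
      rw [hp2 b ⟨i, (Nat.add_eq_zero.mp hbc).1⟩, zero_mul]
    · rfl

/-- The induced map `EⁿB → EⁿC` of iterated path rings. -/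
def EnMap {B C : Type} [NonUnitalRing B] [NonUnitalRing C] (g : B →ₙ+* C) (n : ℕ) :
    ↥(EnSub B n) →ₙ+* ↥(EnSub C n) where
  toFun p := ⟨MAmap g ↑p, by
    rcases p.2 with ⟨h1, h2⟩
    exact ⟨fun a => by rw [MAmap_apply, uMap_fst, h1 a],
      fun a ha => by rw [MAmap_apply, h2 a ha, map_zero]⟩⟩
  map_zero' := Subtype.ext (map_zero (MAmap g))
  map_add' p q := Subtype.ext (by
    show MAmap g ((p : MA B (Fin n →₀ ℕ)) + (q : MA B (Fin n →₀ ℕ)))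
      = MAmap g (p : MA B (Fin n →₀ ℕ)) + MAmap g (q : MA B (Fin n →₀ ℕ))
    exact map_add _ _ _)
  map_mul' p q := Subtype.ext (by
    show MAmap g ((p : MA B (Fin n →₀ ℕ)) * (q : MA B (Fin n →₀ ℕ)))
      = MAmap g (p : MA B (Fin n →₀ ℕ)) * MAmap g (q : MA B (Fin n →₀ ℕ))
    exact map_mul _ _ _)

/-- A surjective homomorphism `g : B → C` is an `F`-fibration if `F(Eⁿg)` is surjective for
all `n > 0`. -/
def FFibration (F : RingFunctor) {B C : Type} [NonUnitalRing B] [NonUnitalRing C]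
    (g : B →ₙ+* C) : Prop :=
  Function.Surjective g ∧ ∀ n : ℕ, 0 < n → Function.Surjective (F.map (EnMap g n))

/-- The pullback of `f : A → C` and `g : B → C` as a non-unital subring of `A × B`. -/
def pb2Sub {A B C : Type} [NonUnitalRing A] [NonUnitalRing B] [NonUnitalRing C]
    (f : A →ₙ+* C) (g : B →ₙ+* C) : NonUnitalSubring (A × B) where
  carrier := {z | f z.1 = g z.2}
  add_mem' := by
    intro z w hz hw
    show f (z.1 + w.1) = g (z.2 + w.2)
    rw [map_add, map_add, hz, hw]
  zero_mem' := by show f 0 = g 0; rw [map_zero, map_zero]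
  neg_mem' := by intro z hz; show f (-z.1) = g (-z.2); rw [map_neg, map_neg, hz]
  mul_mem' := by
    intro z w hz hw
    show f (z.1 * w.1) = g (z.2 * w.2)
    rw [map_mul, map_mul, hz, hw]

/-- First projection of the pullback. -/
def pb2Pr1 {A B C : Type} [NonUnitalRing A] [NonUnitalRing B] [NonUnitalRing C]
    (f : A →ₙ+* C) (g : B →ₙ+* C) : ↥(pb2Sub f g) →ₙ+* A :=
  (NonUnitalRingHom.fst A B).comp (NonUnitalSubringClass.subtype (pb2Sub f g))

/-- Second projection of the pullback. -/
def pb2Pr2 {A B C : Type} [NonUnitalRing A] [NonUnitalRing B] [NonUnitalRing C]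
    (f : A →ₙ+* C) (g : B →ₙ+* C) : ↥(pb2Sub f g) →ₙ+* B :=
  (NonUnitalRingHom.snd A B).comp (NonUnitalSubringClass.subtype (pb2Sub f g))

theorem pb2_comm {A B C : Type} [NonUnitalRing A] [NonUnitalRing B] [NonUnitalRing C]
    (f : A →ₙ+* C) (g : B →ₙ+* C) : f.comp (pb2Pr1 f g) = g.comp (pb2Pr2 f g) :=
  NonUnitalRingHom.ext fun z => z.2

/-- A functor on rings is left exact if it preserves the zero object and pullbacks
(hence all finite limits). -/
def LeftExact (F : RingFunctor) : Prop :=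
  (∀ x y : F.obj PUnit, x = y) ∧
  ∀ (A B C : Type) [NonUnitalRing A] [NonUnitalRing B] [NonUnitalRing C]
    (f : A →ₙ+* C) (g : B →ₙ+* C),
    Function.Bijective (fun z : F.obj ↥(pb2Sub f g) =>
      (⟨(F.map (pb2Pr1 f g) z, F.map (pb2Pr2 f g) z), by
        have h1 : F.map f (F.map (pb2Pr1 f g) z) = F.map (f.comp (pb2Pr1 f g)) z := by
          rw [F.map_comp]; rfl
        have h2 : F.map g (F.map (pb2Pr2 f g) z) = F.map (g.comp (pb2Pr2 f g)) z := by
          rw [F.map_comp]; rfl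
        rw [h1, h2, pb2_comm]⟩ :
        {w : F.obj A × F.obj B // F.map f w.1 = F.map g w.2}))

/-! Taking iterated path rings is functorial, `Eⁿ(f ∘ g) = Eⁿf ∘ Eⁿg`, so
`F(Eⁿ(f ∘ g)) = F(Eⁿf) ∘ F(Eⁿg)`. Surjectivity is stable under composition and passes from a
composite to its left factor, and any functor sends a split epimorphism to a split epimorphism;
this gives the three closure properties. -/

theorem uMap_comp {A B C : Type} [NonUnitalRing A] [NonUnitalRing B] [NonUnitalRing C]
    (g : A →ₙ+* B) (f : B →ₙ+* C) (x : URing A) :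
    uMap (f.comp g) x = uMap f (uMap g x) := by
  ext <;> simp [uMap]

theorem uMap_id {A : Type} [NonUnitalRing A] (x : URing A) :
    uMap (NonUnitalRingHom.id A) x = x := by
  ext <;> simp [uMap]

theorem MAmap_comp {A B C G : Type} [NonUnitalRing A] [NonUnitalRing B] [NonUnitalRing C]
    [AddCommMonoid G] (g : A →ₙ+* B) (f : B →ₙ+* C) (p : MA A G) :
    MAmap (f.comp g) p = MAmap f (MAmap g p) :=
  AddMonoidAlgebra.coeff_injective <| Finsupp.ext fun a => by
    rw [MAmap_apply, MAmap_apply, MAmap_apply, uMap_comp]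

theorem MAmap_id {A G : Type} [NonUnitalRing A] [AddCommMonoid G] (p : MA A G) :
    MAmap (NonUnitalRingHom.id A) p = p :=
  AddMonoidAlgebra.coeff_injective <| Finsupp.ext fun a => by
    rw [MAmap_apply, uMap_id]

theorem EnMap_comp {A B C : Type} [NonUnitalRing A] [NonUnitalRing B] [NonUnitalRing C]
    (g : A →ₙ+* B) (f : B →ₙ+* C) (n : ℕ) :
    EnMap (f.comp g) n = (EnMap f n).comp (EnMap g n) :=
  NonUnitalRingHom.ext fun _ => Subtype.ext (MAmap_comp g f _)

theorem EnMap_id {A : Type} [NonUnitalRing A] (n : ℕ) :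
    EnMap (NonUnitalRingHom.id A) n = NonUnitalRingHom.id _ :=
  NonUnitalRingHom.ext fun _ => Subtype.ext (MAmap_id _)

theorem RingFunctor.map_surjective_of_comp_eq_id (F : RingFunctor) {B C : Type}
    [NonUnitalRing B] [NonUnitalRing C] {g : B →ₙ+* C} {h : C →ₙ+* B}
    (hgh : g.comp h = NonUnitalRingHom.id C) : Function.Surjective (F.map g) := by
  have hsection : F.map g ∘ F.map h = id := by rw [← F.map_comp, hgh, F.map_id]
  exact fun x => ⟨F.map h x, congrFun hsection x⟩

namespace FFibration

variable {F : RingFunctor} {A B C : Type} [NonUnitalRing A] [NonUnitalRing B] [NonUnitalRing C]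

theorem of_comp_eq_id {g : B →ₙ+* C} {h : C →ₙ+* B} (hgh : g.comp h = NonUnitalRingHom.id C) :
    FFibration F g := by
  refine ⟨fun c => ⟨h c, DFunLike.congr_fun hgh c⟩, fun n _ => ?_⟩
  refine F.map_surjective_of_comp_eq_id (h := EnMap h n) ?_
  rw [← EnMap_comp, hgh, EnMap_id]

theorem comp {g : A →ₙ+* B} {f : B →ₙ+* C} (hg : FFibration F g) (hf : FFibration F f) :
    FFibration F (f.comp g) := by
  refine ⟨hf.1.comp hg.1, fun n hn => ?_⟩
  rw [EnMap_comp, F.map_comp]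
  exact (hf.2 n hn).comp (hg.2 n hn)

theorem of_comp {g : A →ₙ+* B} {f : B →ₙ+* C} (hfg : FFibration F (f.comp g)) :
    FFibration F f := by
  refine ⟨Function.Surjective.of_comp hfg.1, fun n hn => ?_⟩
  have hsurj := hfg.2 n hn
  rw [EnMap_comp, F.map_comp] at hsurj
  exact hsurj.of_comp

end FFibration

theorem ffibration_closure_general (F : RingFunctor) :
    (∀ (B C : Type) [NonUnitalRing B] [NonUnitalRing C] (g : B →ₙ+* C) (h : C →ₙ+* B),
      g.comp h = NonUnitalRingHom.id C → h.comp g = NonUnitalRingHom.id B →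
      FFibration F g) ∧
    (∀ (A B C : Type) [NonUnitalRing A] [NonUnitalRing B] [NonUnitalRing C]
      (g : A →ₙ+* B) (f : B →ₙ+* C),
      FFibration F g → FFibration F f → FFibration F (f.comp g)) ∧
    (∀ (A B C : Type) [NonUnitalRing A] [NonUnitalRing B] [NonUnitalRing C]
      (g : A →ₙ+* B) (f : B →ₙ+* C),
      Function.Surjective g → Function.Surjective f →
      FFibration F (f.comp g) → FFibration F f) :=
  ⟨fun _ _ _ _ _ _ hgh _ => FFibration.of_comp_eq_id hgh,
    fun _ _ _ _ _ _ _ _ hg hf => hg.comp hf,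
    fun _ _ _ _ _ _ _ _ _ _ hfg => FFibration.of_comp hfg⟩

/-- for a left exact functor `F`, the `F`-fibrations contain all isomorphisms,
are closed under composition, and if a composite `f ∘ g` of surjective homomorphisms is an
`F`-fibration then so is `f`. -/
theorem ffibration_closure (F : RingFunctor) (hF : LeftExact F) :
    (∀ (B C : Type) [NonUnitalRing B] [NonUnitalRing C] (g : B →ₙ+* C) (h : C →ₙ+* B),
      g.comp h = NonUnitalRingHom.id C → h.comp g = NonUnitalRingHom.id B →
      FFibration F g) ∧
    (∀ (A B C : Type) [NonUnitalRing A] [NonUnitalRing B] [NonUnitalRing C]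
      (g : A →ₙ+* B) (f : B →ₙ+* C),
      FFibration F g → FFibration F f → FFibration F (f.comp g)) ∧
    (∀ (A B C : Type) [NonUnitalRing A] [NonUnitalRing B] [NonUnitalRing C]
      (g : A →ₙ+* B) (f : B →ₙ+* C),
      Function.Surjective g → Function.Surjective f →
      FFibration F (f.comp g) → FFibration F f) :=
  ffibration_closure_general F
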